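/- arXiv:1703.04892 — 3 statements merged into one kernel-verified Lean document; each statement's English description precedes it below -/
import Mathlib

section
/- Whitney decomposition of the positive quadrant off the diagonal: With the sibling relation τ_k^j ∼ τ_ℓ^j defined by ℓ−k ∈ {−2,2,3} if k is even and ℓ−k ∈ {−3,−2,2} if k is odd, one has the set identity ([0,∞)×[0,∞)) \ {(ξ,ξ) : ξ ≥ 0} = ⋃_{j∈ℤ} ⋃_{k,ℓ ∈ ℤ_{≥0}, τ_ℓ^j ∼ τ_k^j} τ_k^j × τ_ℓ^j. -/
open MeasureTheory Filter Set
open scoped ENNReal NNReal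

noncomputable section

/-- Hölder conjugate exponent in `ℝ≥0∞`. -/
def dualExp (p : ℝ≥0∞) : ℝ≥0∞ := 1 / (1 - 1 / p)

/-- `L^p` norm (with values in `ℝ≥0∞`) of an `ℝ≥0∞`-valued function. -/
def eLp {α : Type*} [MeasurableSpace α] (p : ℝ≥0∞) (μ : Measure α) (g : α → ℝ≥0∞) : ℝ≥0∞ :=
  if p = ∞ then essSup g μ else (∫⁻ a, g a ^ p.toReal ∂μ) ^ (1 / p.toReal)

/-- Fourier transform. -/
def FT (f : ℝ → ℂ) : ℝ → ℂ := FourierTransform.fourier f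

/-- Inverse Fourier transform. -/
def FTinv (f : ℝ → ℂ) : ℝ → ℂ := FourierTransformInv.fourierInv f

/-- The Airy propagator `e^{-t ∂_x^3}`, i.e. the Fourier multiplier with symbol `e^{i t ξ³}`. -/
def airy (t : ℝ) (f : ℝ → ℂ) : ℝ → ℂ :=
  FTinv (fun ξ => Complex.exp (Complex.I * (t : ℂ) * (ξ : ℂ) ^ 3) * FT f ξ)

/-- `|∂_x|^s`, the Fourier multiplier with symbol `|ξ|^s`. -/
def absD (s : ℝ) (f : ℝ → ℂ) : ℝ → ℂ :=
  FTinv (fun ξ => ((|ξ| ^ s : ℝ) : ℂ) * FT f ξ)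

/-- Mixed norm `L^p_x L^q_t (ℝ × I)` of `u = u t x`. -/
def LxLt (p q : ℝ≥0∞) (I : Set ℝ) (u : ℝ → ℝ → ℂ) : ℝ≥0∞ :=
  eLp p volume (fun x => eLp q (volume.restrict I) (fun t => (‖u t x‖₊ : ℝ≥0∞)))

/-- Mixed norm `L^p_t L^q_x (I × ℝ)` of `u = u t x`. -/
def LtLx (p q : ℝ≥0∞) (I : Set ℝ) (u : ℝ → ℝ → ℂ) : ℝ≥0∞ :=
  eLp p (volume.restrict I) (fun t => eLp q volume (fun x => (‖u t x‖₊ : ℝ≥0∞)))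

/-- hat-Lebesgue norm `‖f‖_{L̂^a} = ‖f̂‖_{L^{a'}}`. -/
def hatLp (a : ℝ≥0∞) (f : ℝ → ℂ) : ℝ≥0∞ :=
  eLp (dualExp a) volume (fun ξ => (‖FT f ξ‖₊ : ℝ≥0∞))

/-- The dyadic interval `τ^j_k = [k 2^{-j}, (k+1) 2^{-j})`. -/
def dyadic (j k : ℤ) : Set ℝ := Set.Ico ((k : ℝ) * 2 ^ (-j)) (((k : ℝ) + 1) * 2 ^ (-j))

/-- `ℓ^δ` norm over all pairs `(j,k) ∈ ℤ × ℤ`. -/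
def ld (d : ℝ≥0∞) (g : ℤ × ℤ → ℝ≥0∞) : ℝ≥0∞ :=
  if d = ∞ then ⨆ v, g v else (∑' v, g v ^ d.toReal) ^ (1 / d.toReal)

/-- hat-Morrey norm `‖f‖_{M̂^b_{g,d}}`. -/
def hatMorrey (b g d : ℝ≥0∞) (f : ℝ → ℂ) : ℝ≥0∞ :=
  ld d (fun jk =>
    ENNReal.ofReal (((2 : ℝ) ^ (-jk.1)) ^ ((1 / g).toReal - (1 / b).toReal)) *
      eLp (dualExp g) (volume.restrict (dyadic jk.1 jk.2)) (fun ξ => (‖FT f ξ‖₊ : ℝ≥0∞)))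

/-- Morrey norm `‖f‖_{M^b_{g,d}}`. -/
def morrey (b g d : ℝ≥0∞) (f : ℝ → ℂ) : ℝ≥0∞ :=
  ld d (fun jk =>
    ENNReal.ofReal (((2 : ℝ) ^ (-jk.1)) ^ ((1 / b).toReal - (1 / g).toReal)) *
      eLp g (volume.restrict (dyadic jk.1 jk.2)) (fun x => (‖f x‖₊ : ℝ≥0∞)))

/-- The gKdV nonlinearity `|u|^{2α} u`. -/
def gNL (a : ℝ) (v : ℝ → ℂ) : ℝ → ℂ := fun x => ((‖v x‖ ^ (2 * a) : ℝ) : ℂ) * v x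

/-- `u` satisfies the Duhamel formula for gKdV on `I`. -/
def DuhamelOn (a μ t₀ : ℝ) (u₀ : ℝ → ℂ) (I : Set ℝ) (u : ℝ → ℝ → ℂ) : Prop :=
  ∀ t ∈ I, ∀ x : ℝ,
    u t x = airy (t - t₀) u₀ x
      + (μ : ℂ) * ∫ s in t₀..t, airy (t - s) (deriv (gNL a (u s))) x

/-- The norm `‖u‖_{L(I)}`. -/
def normL (a : ℝ) (I : Set ℝ) (u : ℝ → ℝ → ℂ) : ℝ≥0∞ :=
  LxLt (ENNReal.ofReal (5 * a)) (ENNReal.ofReal (5 * a / 3)) I (fun t => absD (1 / a) (u t))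

/-- The norm `‖u‖_{M(I)}`. -/
def normM (a : ℝ) (I : Set ℝ) (u : ℝ → ℝ → ℂ) : ℝ≥0∞ :=
  LxLt (ENNReal.ofReal (10 * a / 3)) (ENNReal.ofReal (5 * a / 2)) I
    (fun t => absD (1 / (2 * a)) (u t))

/-- The norm `‖u‖_{S(I)}`. -/
def normS (a : ℝ) (I : Set ℝ) (u : ℝ → ℝ → ℂ) : ℝ≥0∞ :=
  LxLt (ENNReal.ofReal (5 * a / 2)) (ENNReal.ofReal (5 * a)) I u

/-- The norm `‖u‖_{N(I)}`. -/
def normN (a : ℝ) (I : Set ℝ) (u : ℝ → ℝ → ℂ) : ℝ≥0∞ :=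
  LxLt (ENNReal.ofReal (1 / (3 / (10 * a) + 4 / 5))) (ENNReal.ofReal (1 / (2 / (5 * a) + 2 / 5)))
    I (fun t => absD (1 / (2 * a)) (u t))

/-- Translation `(T y f)(x) = f (x - y)`. -/
def Tdef (y : ℝ) (f : ℝ → ℂ) : ℝ → ℂ := fun x => f (x - y)

/-- Dilation `(D h f)(x) = h^{1/a} f (h x)`. -/
def Ddef (a h : ℝ) (f : ℝ → ℂ) : ℝ → ℂ := fun x => ((h ^ (1 / a) : ℝ) : ℂ) * f (h * x)

/-- Enlargement of a set in the `τ`-direction. -/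
def enlarge (R : Set (ℝ × ℝ)) (lam : ℝ) : Set (ℝ × ℝ) :=
  {p | ∃ τ' : ℝ, |τ'| ≤ lam ∧ (p.1 - τ', p.2) ∈ R}

/-- The Whitney piece `A_{j,k,ℓ}`. -/
def setA (j k l : ℤ) : Set (ℝ × ℝ) :=
  {p | ((k : ℝ) + l) / 2 ^ j ≤ p.2 ∧ p.2 ≤ ((k : ℝ) + l + 2) / 2 ^ j ∧
    (if l < k then
      (3 / 4) * (((k : ℝ) - l - 1) ^ 2 / 2 ^ (2 * j)) * p.2 ≤ p.1 - p.2 ^ 3 / 4 ∧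
        p.1 - p.2 ^ 3 / 4 ≤ (3 / 4) * (((k : ℝ) - l + 1) ^ 2 / 2 ^ (2 * j)) * p.2
     else
      (3 / 4) * (((k : ℝ) - l + 1) ^ 2 / 2 ^ (2 * j)) * p.2 ≤ p.1 - p.2 ^ 3 / 4 ∧
        p.1 - p.2 ^ 3 / 4 ≤ (3 / 4) * (((k : ℝ) - l - 1) ^ 2 / 2 ^ (2 * j)) * p.2)}

/-- The Whitney piece `B_{j,k,ℓ}`. -/
def setB (j k l : ℤ) : Set (ℝ × ℝ) :=
  {p | ((k : ℝ) - l - 1) / 2 ^ j ≤ p.2 ∧ p.2 ≤ ((k : ℝ) - l + 1) / 2 ^ j ∧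
    (if l < k then
      (3 / 4) * (((k : ℝ) + l) ^ 2 / 2 ^ (2 * j)) * p.2 ≤ p.1 - p.2 ^ 3 / 4 ∧
        p.1 - p.2 ^ 3 / 4 ≤ (3 / 4) * (((k : ℝ) + l + 2) ^ 2 / 2 ^ (2 * j)) * p.2
     else
      (3 / 4) * (((k : ℝ) + l + 2) ^ 2 / 2 ^ (2 * j)) * p.2 ≤ p.1 - p.2 ^ 3 / 4 ∧
        p.1 - p.2 ^ 3 / 4 ≤ (3 / 4) * (((k : ℝ) + l) ^ 2 / 2 ^ (2 * j)) * p.2)}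

/-- The enlarged Whitney piece `Ã_{j,k,ℓ}`. -/
def tildeA (j k l : ℤ) : Set (ℝ × ℝ) := enlarge (setA j k l) ((k : ℝ) / (100 * 2 ^ (3 * j)))

/-- The enlarged Whitney piece `B̃_{j,k,ℓ}`. -/
def tildeB (j k l : ℤ) : Set (ℝ × ℝ) := enlarge (setB j k l) ((k : ℝ) / (100 * 2 ^ (3 * j)))

/-- Space-time Fourier transform `𝓕_{t,x}`, `u = u t x`, output as a function of `(τ, ξ)`. -/
def F2 (u : ℝ → ℝ → ℂ) : ℝ → ℝ → ℂ := fun τ ξ =>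
  ∫ t : ℝ, ∫ x : ℝ,
    Complex.exp (((-2 * Real.pi * (t * τ + x * ξ) : ℝ) : ℂ) * Complex.I) * u t x

/-- Inverse space-time Fourier transform. -/
def F2inv (U : ℝ → ℝ → ℂ) : ℝ → ℝ → ℂ := fun t x =>
  ∫ τ : ℝ, ∫ ξ : ℝ,
    Complex.exp (((2 * Real.pi * (t * τ + x * ξ) : ℝ) : ℂ) * Complex.I) * U τ ξ

/-- The smoothed cut-off `ψ_{R,λ}`. -/
def psiCut (φ : ℝ → ℝ) (R : Set (ℝ × ℝ)) (lam : ℝ) : ℝ → ℝ → ℝ := fun τ ξ =>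
  ∫ s : ℝ, (2 / lam) * φ (2 * s / lam) *
      (enlarge R (lam / 2)).indicator (fun _ => (1 : ℝ)) (τ - s, ξ)

/-- The space-time Fourier multiplier `P_{R,λ}`. -/
def Pmul (φ : ℝ → ℝ) (R : Set (ℝ × ℝ)) (lam : ℝ) (F : ℝ → ℝ → ℂ) : ℝ → ℝ → ℂ :=
  F2inv (fun τ ξ => ((psiCut φ R lam τ ξ : ℝ) : ℂ) * F2 F τ ξ)

/-- The kernel `K(t,x) = ∬_{R_{+λ/2}} e^{i(tτ+xξ)} dτ dξ`. -/
def kernelK (R : Set (ℝ × ℝ)) (lam : ℝ) (t x : ℝ) : ℂ :=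
  ∫ p in enlarge R (lam / 2), Complex.exp (((t * p.1 + x * p.2 : ℝ) : ℂ) * Complex.I)

/-- The index set `Λ`. -/
def Lam : Set (ℤ × ℤ × ℤ) :=
  {v | 0 ≤ v.2.1 ∧ 0 ≤ v.2.2 ∧
    (v.2.2 - v.2.1 = -3 ∨ v.2.2 - v.2.1 = -2 ∨ v.2.2 - v.2.1 = 2 ∨ v.2.2 - v.2.1 = 3)}

/-- The Whitney sibling relation. -/
def sibling (k l : ℤ) : Prop :=
  if Even k then l - k = -2 ∨ l - k = 2 ∨ l - k = 3
  else l - k = -3 ∨ l - k = -2 ∨ l - k = 2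

end

/-!
For `0 ≤ x < y`, compare the integer parts of `x 2^j` and `y 2^j`. Their difference is `0` at
coarse scales (`y 2^j < 1`) and at least `2` at fine scales. Between two consecutive scales the
integer parts of `x 2^j` and `y 2^j` are doubled up to `+1`, so at a scale where the difference
jumps from at most `1` to at least `2` it is `2` or `3`, and it is `3` only when the left integer part is even and
the right one odd: this is exactly the sibling relation. Conversely, siblings are distinct, so the
squares `τ_k^j × τ_ℓ^j` miss the diagonal.
-/

theorem sibling_iff {k l : ℤ} :
    sibling k l ↔ l - k = 2 ∨ k - l = 2 ∨ (l - k = 3 ∧ k % 2 = 0) ∨ (k - l = 3 ∧ k % 2 = 1) := by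
  unfold sibling
  split_ifs with hk
  · rw [Int.even_iff] at hk; omega
  · rw [Int.not_even_iff] at hk; omega

theorem sibling_comm {k l : ℤ} : sibling k l ↔ sibling l k := by
  simp only [sibling_iff]; omega

theorem sibling.ne {k l : ℤ} (h : sibling k l) : k ≠ l := by
  rw [sibling_iff] at h; omega

theorem Int.floor_two_mul {R : Type*} [CommRing R] [LinearOrder R] [IsStrictOrderedRing R]
    [FloorRing R] (a : R) : ⌊2 * a⌋ = 2 * ⌊a⌋ ∨ ⌊2 * a⌋ = 2 * ⌊a⌋ + 1 := by
  have hle : 2 * ⌊a⌋ ≤ ⌊2 * a⌋ :=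
    Int.le_floor.2 (by push_cast; linarith [Int.floor_le a])
  have hlt : ⌊2 * a⌋ < 2 * ⌊a⌋ + 2 :=
    Int.floor_lt.2 (by push_cast; linarith [Int.lt_floor_add_one a])
  omega

theorem sibling_floor_two_mul {R : Type*} [CommRing R] [LinearOrder R] [IsStrictOrderedRing R]
    [FloorRing R] {a b : R} (hab : ⌊b⌋ - ⌊a⌋ ≤ 1) (hab₂ : 2 ≤ ⌊2 * b⌋ - ⌊2 * a⌋) :
    sibling ⌊2 * a⌋ ⌊2 * b⌋ := by
  rw [sibling_iff]
  rcases Int.floor_two_mul a with ha | ha <;> rcases Int.floor_two_mul b with hb | hb <;> omega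

theorem Int.exists_not_and_succ {p : ℤ → Prop} {a b : ℤ} (hab : a ≤ b) (ha : ¬ p a) (hb : p b) :
    ∃ j, ¬ p j ∧ p (j + 1) := by
  obtain ⟨n, hn, hn₁⟩ := Nat.exists_not_and_succ_of_not_zero_of_exists (p := fun n => p (a + n))
    (by simpa using ha) ⟨(b - a).toNat, by simpa [Int.toNat_of_nonneg (sub_nonneg.2 hab)] using hb⟩
  exact ⟨a + n, hn, by simpa [add_assoc] using hn₁⟩

theorem exists_floor_gap_le_one_and_succ {x y : ℝ} (hx : 0 ≤ x) (hxy : x < y) :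
    ∃ j : ℤ, ⌊y * 2 ^ j⌋ - ⌊x * 2 ^ j⌋ ≤ 1 ∧ 2 ≤ ⌊y * 2 ^ (j + 1)⌋ - ⌊x * 2 ^ (j + 1)⌋ := by
  obtain ⟨N, hN⟩ := pow_unbounded_of_one_lt (max y (2 / (y - x))) one_lt_two
  have hpow : (0 : ℝ) < 2 ^ N := by positivity
  have hcoarse : ⌊y * 2 ^ (-(N : ℤ))⌋ - ⌊x * 2 ^ (-(N : ℤ))⌋ ≤ 1 := by
    have hy : ⌊y * 2 ^ (-(N : ℤ))⌋ ≤ 0 := by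
      rw [← Int.lt_add_one_iff, Int.floor_lt, zpow_neg, zpow_natCast, ← div_eq_mul_inv,
        div_lt_iff₀ hpow]
      push_cast; linarith [le_max_left y (2 / (y - x))]
    have hx : 0 ≤ ⌊x * 2 ^ (-(N : ℤ))⌋ := Int.floor_nonneg.2 (by positivity)
    omega
  have hfine : 2 ≤ ⌊y * 2 ^ (N : ℤ)⌋ - ⌊x * 2 ^ (N : ℤ)⌋ := by
    have hgap : x * 2 ^ N + 2 ≤ y * 2 ^ N := by
      have hN' := (div_lt_iff₀ (sub_pos.2 hxy)).1 ((le_max_right y _).trans_lt hN)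
      linarith
    have hfloor : ⌊x * 2 ^ N⌋ + 2 ≤ ⌊y * 2 ^ N⌋ :=
      Int.le_floor.2 (by push_cast; linarith [Int.floor_le (x * 2 ^ N)])
    rw [zpow_natCast]; omega
  obtain ⟨j, hj, hj₁⟩ := Int.exists_not_and_succ (p := fun j : ℤ => 2 ≤ ⌊y * 2 ^ j⌋ - ⌊x * 2 ^ j⌋)
    (a := -N) (b := N) (by omega) (by simpa using hcoarse) hfine
  exact ⟨j, by simpa using hj, hj₁⟩

theorem exists_sibling_floor_mul_zpow {x y : ℝ} (hx : 0 ≤ x) (hxy : x < y) :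
    ∃ j : ℤ, sibling ⌊x * 2 ^ j⌋ ⌊y * 2 ^ j⌋ := by
  obtain ⟨j, hj, hj₁⟩ := exists_floor_gap_le_one_and_succ hx hxy
  have hdouble (t : ℝ) : t * 2 ^ (j + 1) = 2 * (t * 2 ^ j) := by
    rw [zpow_add_one₀ two_ne_zero]; ring
  rw [hdouble, hdouble] at hj₁
  exact ⟨j + 1, by simpa only [hdouble] using sibling_floor_two_mul hj hj₁⟩

theorem mem_dyadic_iff {j k : ℤ} {x : ℝ} : x ∈ dyadic j k ↔ ⌊x * 2 ^ j⌋ = k := by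
  have hpow : (0 : ℝ) < 2 ^ j := zpow_pos two_pos j
  rw [Int.floor_eq_iff, dyadic, mem_Ico, zpow_neg, ← div_eq_mul_inv, ← div_eq_mul_inv,
    div_le_iff₀ hpow, lt_div_iff₀ hpow]

/-- Whitney decomposition of the positive quadrant off the diagonal. -/
theorem whitney_decomposition :
    (Set.Ici (0 : ℝ) ×ˢ Set.Ici (0 : ℝ)) \ {p : ℝ × ℝ | ∃ ξ : ℝ, 0 ≤ ξ ∧ p = (ξ, ξ)} =
      ⋃ (j : ℤ) (k : ℤ) (l : ℤ) (_ : 0 ≤ k) (_ : 0 ≤ l) (_ : sibling k l),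
        dyadic j k ×ˢ dyadic j l := by
  ext ⟨x, y⟩
  simp only [Set.mem_sdiff, mem_prod, mem_Ici, mem_ofPred_eq, mem_iUnion, Prod.mk.injEq,
    mem_dyadic_iff, exists_prop]
  constructor
  · rintro ⟨⟨hx, hy⟩, hdiag⟩
    have hfloor {t : ℝ} (ht : 0 ≤ t) (j : ℤ) : 0 ≤ ⌊t * 2 ^ j⌋ :=
      Int.floor_nonneg.2 (by positivity)
    obtain ⟨j, hj⟩ : ∃ j : ℤ, sibling ⌊x * 2 ^ j⌋ ⌊y * 2 ^ j⌋ := by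
      have hne : x ≠ y := fun h => hdiag ⟨x, hx, rfl, h.symm⟩
      rcases hne.lt_or_gt with hxy | hyx
      · exact exists_sibling_floor_mul_zpow hx hxy
      · obtain ⟨j, hj⟩ := exists_sibling_floor_mul_zpow hy hyx
        exact ⟨j, sibling_comm.1 hj⟩
    exact ⟨j, _, _, hfloor hx j, hfloor hy j, hj, rfl, rfl⟩
  · rintro ⟨j, _, _, hk, hl, hkl, rfl, rfl⟩
    have hpow : (0 : ℝ) < 2 ^ j := zpow_pos two_pos j
    refine ⟨⟨(mul_nonneg_iff_of_pos_right hpow).1 (Int.floor_nonneg.1 hk),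
      (mul_nonneg_iff_of_pos_right hpow).1 (Int.floor_nonneg.1 hl)⟩, ?_⟩
    rintro ⟨ξ, -, rfl, rfl⟩
    exact hkl.ne rfl
end

section
/- Almost orthogonality of the enlarged Whitney pieces: Let Λ := {(j,k,ℓ) ∈ ℤ×ℤ_{≥0}×ℤ_{≥0} : ℓ−k ∈ {−3,−2,2,3}}. Then for almost every (τ,ξ) ∈ ℝ², ∑_{(j,k,ℓ)∈Λ} 1_{Ã_{j,k,ℓ}}(τ,ξ) ≤ 12, and likewise ∑_{(j,k,ℓ)∈Λ} 1_{B̃_{j,k,ℓ}}(τ,ξ) ≤ 12. -/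
open MeasureTheory Filter Set
open scoped ENNReal NNReal

/-
Write `p = (τ, ξ)` and `η² := 4 (τ - ξ³/4) / (3 ξ)`; if `(τ, ξ) = (ξ₁³ + ξ₂³, ξ₁ + ξ₂)` then
`η = |ξ₁ - ξ₂|`. The piece `A_{j,k,ℓ}` is the set where `2^j ξ ∈ [k+ℓ, k+ℓ+2]` and
`2^j η ∈ [|k-ℓ|-1, |k-ℓ|+1]`, and `B_{j,k,ℓ}` the one where the roles of `ξ` and `η` are
swapped. The enlargement by `k 2^{-3j}/100` moves `4^j η²` by at most `k/(75 · 2^j |ξ|)`, which is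
too little to spoil these windows. Hence, for `p ∈ Ã_{j,k,ℓ}`, the scale `j` is one of three values
determined by `log₂ η²`, then `k + ℓ` is one of two values determined by `⌊2^j ξ⌋` (off the null set
where `2^j ξ` is an integer), and `ℓ - k`, whose size `2` or `3` is fixed by the parity of `k + ℓ`,
is one of two values. For `B̃_{j,k,ℓ}` the roles are: `j` from `log₂ |ξ|`, `k - ℓ` from `⌊2^j ξ⌋`
and `ℓ` from `2^j η`. Each count is `3 · 2 · 2 = 12`.
-/

theorem tsum_indicator_one_le_card {ι κ α : Type*} (s : ι → Set α) (a : α) (f : ι → κ)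
    (t : Finset κ) (hf : MapsTo f {i | a ∈ s i} t) (hinj : InjOn f {i | a ∈ s i}) :
    ∑' i, (s i).indicator (fun _ => (1 : ℝ≥0∞)) a ≤ t.card := by
  calc ∑' i, (s i).indicator (fun _ => (1 : ℝ≥0∞)) a
      = ∑' i, {i | a ∈ s i}.indicator (fun _ => (1 : ℝ≥0∞)) i := by simp [Set.indicator]
    _ = {i | a ∈ s i}.encard := by rw [← tsum_subtype, ENNReal.tsum_set_one]
    _ ≤ (t : Set κ).encard := by exact_mod_cast encard_le_encard_of_injOn hf hinj
    _ = t.card := by simp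

theorem ae_zpow_two_mul_snd_ne_intCast : ∀ᵐ p : ℝ × ℝ, ∀ j n : ℤ, (2 : ℝ) ^ j * p.2 ≠ n := by
  have hdyadic : (range fun q : ℤ × ℤ => (q.2 : ℝ) / 2 ^ q.1).Countable := countable_range _
  filter_upwards [Measure.quasiMeasurePreserving_snd.ae (hdyadic.ae_notMem volume)]
    with p hp j n hjn
  exact hp ⟨(j, n), by simp only [← hjn]; field_simp⟩

theorem Int.floor_mem_Icc_of_mem_Ico {y : ℝ} {n : ℤ} (hy : y ∈ Ico (n : ℝ) (n + 2)) :
    ⌊y⌋ ∈ Icc n (n + 1) := by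
  refine ⟨Int.le_floor.mpr hy.1, Int.lt_add_one_iff.mp (Int.floor_lt.mpr ?_)⟩
  push_cast
  linarith [hy.2]

theorem Int.log_two_mem_Ico {x : ℝ} {n m c : ℤ} (hx : 2 ^ n * x ∈ Ico (2 ^ m) (2 ^ (m + c))) :
    Int.log 2 x ∈ Ico (m - n) (m + c - n) := by
  obtain ⟨hlo, hhi⟩ := hx
  have h2n : (0 : ℝ) < 2 ^ n := by positivity
  have hx : 0 < x := pos_of_mul_pos_right ((zpow_pos two_pos m).trans_le hlo) h2n.le
  rw [← div_le_iff₀' h2n, ← zpow_sub₀ two_ne_zero] at hlo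
  rw [← lt_div_iff₀' h2n, ← zpow_sub₀ two_ne_zero] at hhi
  exact ⟨(Int.zpow_le_iff_le_log (by norm_num) hx).mp (by exact_mod_cast hlo),
    (Int.lt_zpow_iff_log_lt (by norm_num) hx).mp (by exact_mod_cast hhi)⟩

/-- The squared frequency separation `η²`: equal to `(ξ₁ - ξ₂)²` at `p = (ξ₁³ + ξ₂³, ξ₁ + ξ₂)`. -/
noncomputable def sepSq (p : ℝ × ℝ) : ℝ := 4 * (p.1 - p.2 ^ 3 / 4) / (3 * p.2)

theorem sub_cube_div_four_eq_mul_sepSq {q : ℝ × ℝ} (hq : q.2 ≠ 0) (j : ℤ) :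
    q.1 - q.2 ^ 3 / 4 = 3 / 4 * (2 ^ (2 * j) * sepSq q / 2 ^ (2 * j)) * q.2 := by
  unfold sepSq
  field_simp

theorem mem_Lam_iff {j k l : ℤ} :
    (j, k, l) ∈ Lam ↔ 0 ≤ k ∧ 0 ≤ l ∧ (l - k = -3 ∨ l - k = -2 ∨ l - k = 2 ∨ l - k = 3) :=
  Iff.rfl

theorem mem_Lam_cast_bounds {j k l : ℤ} (hv : (j, k, l) ∈ Lam) :
    (2 : ℝ) ≤ k + l ∧ 2 * (k : ℝ) ≤ k + l + 3 := by
  obtain ⟨hk, hl, hd⟩ := mem_Lam_iff.mp hv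
  constructor <;> norm_cast <;> omega

theorem setA_bounds {j k l : ℤ} (hv : (j, k, l) ∈ Lam) {q : ℝ × ℝ} (hq : q ∈ setA j k l) :
    (k + l : ℝ) ≤ 2 ^ j * q.2 ∧ 2 ^ j * q.2 ≤ k + l + 2 ∧
      1 ≤ 2 ^ (2 * j) * sepSq q ∧ 2 ^ (2 * j) * sepSq q ≤ 16 := by
  obtain ⟨hk, hl, hd⟩ := mem_Lam_iff.mp hv
  obtain ⟨hlo, hhi, hmod⟩ := hq
  have hP : (0 : ℝ) < 2 ^ j := by positivity
  rw [div_le_iff₀ hP] at hlo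
  rw [le_div_iff₀ hP] at hhi
  have hS : (2 : ℝ) ≤ k + l := by exact_mod_cast (show 2 ≤ k + l by omega)
  have hξ : 0 < q.2 := by nlinarith
  simp only [sub_cube_div_four_eq_mul_sepSq hξ.ne' j, mul_le_mul_iff_of_pos_right hξ,
    mul_le_mul_iff_of_pos_left (by norm_num : (0 : ℝ) < 3 / 4),
    div_le_div_iff_of_pos_right (by positivity : (0 : ℝ) < 2 ^ (2 * j))] at hmod
  refine ⟨by linarith, by linarith, ?_⟩
  split_ifs at hmod with hlk
  · have h2 : (2 : ℝ) ≤ k - l := by exact_mod_cast (show 2 ≤ k - l by omega)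
    have h3 : (k : ℝ) - l ≤ 3 := by exact_mod_cast (show k - l ≤ 3 by omega)
    constructor <;> nlinarith
  · have h2 : (k : ℝ) - l ≤ -2 := by exact_mod_cast (show k - l ≤ -2 by omega)
    have h3 : (-3 : ℝ) ≤ k - l := by exact_mod_cast (show -3 ≤ k - l by omega)
    constructor <;> nlinarith

theorem setB_bounds {j k l : ℤ} (hv : (j, k, l) ∈ Lam) {q : ℝ × ℝ} (hq : q ∈ setB j k l) :
    (k - l - 1 : ℝ) ≤ 2 ^ j * q.2 ∧ 2 ^ j * q.2 ≤ k - l + 1 ∧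
      1 ≤ 2 ^ j * |q.2| ∧ 2 ^ j * |q.2| ≤ 4 ∧
      ((k : ℝ) + l) ^ 2 ≤ 2 ^ (2 * j) * sepSq q ∧
      2 ^ (2 * j) * sepSq q ≤ ((k : ℝ) + l + 2) ^ 2 := by
  obtain ⟨hk, hl, hd⟩ := mem_Lam_iff.mp hv
  obtain ⟨hlo, hhi, hmod⟩ := hq
  have hP : (0 : ℝ) < 2 ^ j := by positivity
  rw [div_le_iff₀ hP] at hlo
  rw [le_div_iff₀ hP] at hhi
  split_ifs at hmod with hlk
  · have h2 : (2 : ℝ) ≤ k - l := by exact_mod_cast (show 2 ≤ k - l by omega)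
    have h3 : (k : ℝ) - l ≤ 3 := by exact_mod_cast (show k - l ≤ 3 by omega)
    have hξ : 0 < q.2 := by nlinarith
    simp only [sub_cube_div_four_eq_mul_sepSq hξ.ne' j, mul_le_mul_iff_of_pos_right hξ,
      mul_le_mul_iff_of_pos_left (by norm_num : (0 : ℝ) < 3 / 4),
      div_le_div_iff_of_pos_right (by positivity : (0 : ℝ) < 2 ^ (2 * j))] at hmod
    rw [abs_of_pos hξ]
    exact ⟨by linarith, by linarith, by linarith, by linarith, hmod⟩
  · have h2 : (k : ℝ) - l ≤ -2 := by exact_mod_cast (show k - l ≤ -2 by omega)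
    have h3 : (-3 : ℝ) ≤ k - l := by exact_mod_cast (show -3 ≤ k - l by omega)
    have hξ : q.2 < 0 := by nlinarith
    simp only [sub_cube_div_four_eq_mul_sepSq hξ.ne j, mul_le_mul_right_of_neg hξ,
      mul_le_mul_iff_of_pos_left (by norm_num : (0 : ℝ) < 3 / 4),
      div_le_div_iff_of_pos_right (by positivity : (0 : ℝ) < 2 ^ (2 * j))] at hmod
    rw [abs_of_neg hξ]
    exact ⟨by linarith, by linarith, by linarith, by linarith, hmod.2, hmod.1⟩

theorem abs_sepSq_sub_mul_le (j : ℤ) {k τ' : ℝ} (hτ' : |τ'| ≤ k / (100 * 2 ^ (3 * j)))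
    {p : ℝ × ℝ} (hp : p.2 ≠ 0) :
    |2 ^ (2 * j) * sepSq p - 2 ^ (2 * j) * sepSq (p.1 - τ', p.2)| * (2 ^ j * |p.2|) ≤ k / 75 := by
  have hprod : (2 ^ (2 * j) * sepSq p - 2 ^ (2 * j) * sepSq (p.1 - τ', p.2)) * (2 ^ j * p.2)
      = 4 / 3 * 2 ^ (3 * j) * τ' := by
    rw [show 3 * j = 2 * j + j by ring, zpow_add₀ two_ne_zero]
    unfold sepSq
    field_simp
    ring
  calc _ = |(2 ^ (2 * j) * sepSq p - 2 ^ (2 * j) * sepSq (p.1 - τ', p.2)) * (2 ^ j * p.2)| := by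
        rw [abs_mul, abs_mul, abs_of_pos (by positivity : (0 : ℝ) < 2 ^ j)]
    _ = 4 / 3 * 2 ^ (3 * j) * |τ'| := by rw [hprod, abs_mul, abs_of_pos (by positivity)]
    _ ≤ 4 / 3 * 2 ^ (3 * j) * (k / (100 * 2 ^ (3 * j))) := by gcongr
    _ = k / 75 := by field_simp; ring

theorem tildeA_window {j k l : ℤ} (hv : (j, k, l) ∈ Lam) {p : ℝ × ℝ} (hmem : p ∈ tildeA j k l) :
    (k + l : ℝ) ≤ 2 ^ j * p.2 ∧ 2 ^ j * p.2 ≤ k + l + 2 ∧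
      1 / 2 ≤ 2 ^ (2 * j) * sepSq p ∧ 2 ^ (2 * j) * sepSq p < 32 := by
  obtain ⟨τ', hτ', hq⟩ := hmem
  obtain ⟨hlo, hhi, hr1, hr16⟩ := setA_bounds hv hq
  obtain ⟨hS, hkl⟩ := mem_Lam_cast_bounds hv
  have hP : (0 : ℝ) < 2 ^ j := by positivity
  have hξ : 0 < p.2 := by nlinarith
  have herr := abs_sepSq_sub_mul_le j hτ' hξ.ne'
  rw [abs_of_pos hξ] at herr
  set e := |2 ^ (2 * j) * sepSq p - 2 ^ (2 * j) * sepSq (p.1 - τ', p.2)|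
  have he0 : 0 ≤ e := abs_nonneg _
  have he : e ≤ 1 / 60 := by nlinarith
  obtain ⟨he1, he2⟩ := abs_le.mp he
  exact ⟨hlo, hhi, by linarith, by linarith⟩

theorem tildeB_window {j k l : ℤ} (hv : (j, k, l) ∈ Lam) {p : ℝ × ℝ} (hmem : p ∈ tildeB j k l) :
    (k - l - 1 : ℝ) ≤ 2 ^ j * p.2 ∧ 2 ^ j * p.2 ≤ k - l + 1 ∧
      1 ≤ 2 ^ j * |p.2| ∧ 2 ^ j * |p.2| ≤ 4 ∧
      (k + l - 1 : ℝ) < √(2 ^ (2 * j) * sepSq p) ∧ √(2 ^ (2 * j) * sepSq p) < k + l + 3 := by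
  obtain ⟨τ', hτ', hq⟩ := hmem
  obtain ⟨hlo, hhi, hξ1, hξ4, hr1, hr2⟩ := setB_bounds hv hq
  obtain ⟨hS, hkl⟩ := mem_Lam_cast_bounds hv
  have hξ : p.2 ≠ 0 := by
    rintro h
    simp only [h, abs_zero, mul_zero] at hξ1
    linarith
  have herr := abs_sepSq_sub_mul_le j hτ' hξ
  set e := |2 ^ (2 * j) * sepSq p - 2 ^ (2 * j) * sepSq (p.1 - τ', p.2)|
  have he0 : 0 ≤ e := abs_nonneg _
  have he : e ≤ (k + l + 3) / 150 := by nlinarith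
  obtain ⟨he1, he2⟩ := abs_le.mp he
  refine ⟨hlo, hhi, hξ1, hξ4, (Real.lt_sqrt (by linarith)).mpr ?_,
    (Real.sqrt_lt' (by linarith)).mpr ?_⟩ <;> nlinarith

noncomputable def offsetBox : Finset (ℤ × ℤ × ℤ) :=
  Finset.Icc 0 2 ×ˢ Finset.Icc 0 1 ×ˢ Finset.Icc 0 1

theorem card_offsetBox : offsetBox.card = 12 := rfl

/-- Coordinates of `(j, k, l)` relative to `p`: the offset of `j` from the scale read off
`log₂ η²`, the offset of `k + l` from `⌊2^j ξ⌋`, and the sign of `l - k`. -/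
noncomputable def indexA (p : ℝ × ℝ) (v : ℤ × ℤ × ℤ) : ℤ × ℤ × ℤ :=
  (v.1 + (Int.log 2 (sepSq p) + 1) / 2, ⌊2 ^ v.1 * p.2⌋ - (v.2.1 + v.2.2),
    if v.2.2 < v.2.1 then 0 else 1)

theorem indexA_mem_offsetBox {p : ℝ × ℝ} (hp : ∀ j n : ℤ, (2 : ℝ) ^ j * p.2 ≠ n)
    {v : ℤ × ℤ × ℤ} (hv : v ∈ Lam) (hmem : p ∈ tildeA v.1 v.2.1 v.2.2) :
    indexA p v ∈ offsetBox := by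
  obtain ⟨j, k, l⟩ := v
  obtain ⟨hlo, hhi, hr1, hr2⟩ := tildeA_window hv hmem
  obtain ⟨_, _⟩ := Int.log_two_mem_Ico (x := sepSq p) (n := 2 * j) (m := -1) (c := 6)
    ⟨by norm_num; linarith, by norm_num; linarith⟩
  obtain ⟨_, _⟩ := Int.floor_mem_Icc_of_mem_Ico (y := 2 ^ j * p.2) (n := k + l)
    ⟨by push_cast; linarith, lt_of_le_of_ne (by push_cast; linarith)
      fun h => hp j (k + l + 2) (by rw [h]; push_cast; ring)⟩
  simp only [indexA, offsetBox, Finset.mem_product, Finset.mem_Icc]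
  split_ifs <;> omega

theorem indexA_injOn (p : ℝ × ℝ) : InjOn (indexA p) Lam := by
  intro v hv v' hv' h
  obtain ⟨j, k, l⟩ := v
  obtain ⟨j', k', l'⟩ := v'
  obtain ⟨-, -, hd⟩ := mem_Lam_iff.mp hv
  obtain ⟨-, -, hd'⟩ := mem_Lam_iff.mp hv'
  simp only [indexA, Prod.mk.injEq] at h ⊢
  obtain ⟨hj, hs, hsign⟩ := h
  obtain rfl : j = j' := by omega
  split_ifs at hsign <;> omega

/-- Coordinates of `(j, k, l)` relative to `p`: the offset of `j` from `-log₂ |ξ|`, the offset of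
`k - l` from `⌊2^j ξ⌋`, and the offset of `l` from the window cut out by `2^j η`. -/
noncomputable def indexB (p : ℝ × ℝ) (v : ℤ × ℤ × ℤ) : ℤ × ℤ × ℤ :=
  (v.1 + Int.log 2 |p.2|, v.2.1 - v.2.2 - ⌊2 ^ v.1 * p.2⌋,
    v.2.2 - ⌊(√(2 ^ (2 * v.1) * sepSq p) - (v.2.1 - v.2.2 : ℤ) - 3) / 2⌋ - 1)

theorem indexB_mem_offsetBox {p : ℝ × ℝ} (hp : ∀ j n : ℤ, (2 : ℝ) ^ j * p.2 ≠ n)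
    {v : ℤ × ℤ × ℤ} (hv : v ∈ Lam) (hmem : p ∈ tildeB v.1 v.2.1 v.2.2) :
    indexB p v ∈ offsetBox := by
  obtain ⟨j, k, l⟩ := v
  obtain ⟨hlo, hhi, hξ1, hξ4, hw1, hw2⟩ := tildeB_window hv hmem
  obtain ⟨_, _⟩ := Int.log_two_mem_Ico (x := |p.2|) (n := j) (m := 0) (c := 3)
    ⟨by norm_num; linarith, by norm_num; linarith⟩
  obtain ⟨_, _⟩ := Int.floor_mem_Icc_of_mem_Ico (y := 2 ^ j * p.2) (n := k - l - 1)
    ⟨by push_cast; linarith, lt_of_le_of_ne (by push_cast; linarith)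
      fun h => hp j (k - l + 1) (by rw [h]; push_cast; ring)⟩
  obtain ⟨_, _⟩ := Int.floor_mem_Icc_of_mem_Ico
    (y := (√(2 ^ (2 * j) * sepSq p) - (k - l : ℤ) - 3) / 2) (n := l - 2)
    ⟨by push_cast; linarith, by push_cast; linarith⟩
  simp only [indexB, offsetBox, Finset.mem_product, Finset.mem_Icc]
  omega

theorem indexB_injective (p : ℝ × ℝ) : Function.Injective (indexB p) := by
  rintro ⟨j, k, l⟩ ⟨j', k', l'⟩ h
  simp only [indexB, Prod.mk.injEq] at h ⊢
  obtain ⟨hj, hd, hl⟩ := h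
  obtain rfl : j = j' := by omega
  have hd' : k - l = k' - l' := by omega
  rw [hd'] at hl
  omega

/-- Almost orthogonality of the enlarged Whitney pieces. -/
theorem almost_orthogonality :
    (∀ᵐ p : ℝ × ℝ ∂volume,
      (∑' v : Lam, (tildeA v.1.1 v.1.2.1 v.1.2.2).indicator (fun _ => (1 : ℝ≥0∞)) p) ≤ 12) ∧
    (∀ᵐ p : ℝ × ℝ ∂volume,
      (∑' v : Lam, (tildeB v.1.1 v.1.2.1 v.1.2.2).indicator (fun _ => (1 : ℝ≥0∞)) p) ≤ 12) := by
  have h12 : ((offsetBox.card : ℕ) : ℝ≥0∞) = 12 := by rw [card_offsetBox]; rfl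
  refine ⟨?_, ?_⟩ <;> filter_upwards [ae_zpow_two_mul_snd_ne_intCast] with p hp <;> rw [← h12]
  · exact tsum_indicator_one_le_card _ p (fun v : Lam => indexA p v) offsetBox
      (fun v hv => indexA_mem_offsetBox hp v.2 hv)
      (fun v _ w _ h => Subtype.ext (indexA_injOn p v.2 w.2 h))
  · exact tsum_indicator_one_le_card _ p (fun v : Lam => indexB p v) offsetBox
      (fun v hv => indexB_mem_offsetBox hp v.2 hv)
      (fun v _ w _ h => Subtype.ext (indexB_injective p h))
end

section
/- Pointwise kernel bound for enlarged curved boxes: There is an absolute constant C > 0 with the following property. Let j ∈ ℤ, k ∈ ℤ_{≥1}, λ := k/2^{3j}, and let 0 ≤ a ≤ b and c ≤ d be real numbers satisfying (b+a)(d−c) ≤ 200·k/2^{3j}, b−a ≤ 2/2^j, and b+a ≤ 10·k/2^j. Set R := {(τ,ξ) ∈ ℝ² : a ≤ ξ ≤ b, cξ ≤ τ − ξ³/4 ≤ dξ}, e := (a+b)/2, f := (c+d)/2, and K(t,x) := ∬_{R_{+λ/2}} e^{i(tτ + xξ)} dτ dξ. Then for all (t,x) ∈ ℝ², |K(t,x)|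 ≤ C·(k/2^{3j})·min( 2^{−j}, |x + (3e²/4 + f)t|^{−1} ). -/
open MeasureTheory Filter Set
open scoped ENNReal NNReal

/-!
Slicing the enlarged box `{a ≤ ξ ≤ b, ξ³/4 + cξ - λ/2 ≤ τ ≤ ξ³/4 + dξ + λ/2}` in `ξ` writes
`K(t,x) = ∫_a^b e^{i(x + v t)ξ} W(ξ) dξ`, where `W(ξ)` is the `τ`-integral over the fibre, recentred
at `τ = v ξ` with `v = 3e²/4 + f`. The fibre has length `(d - c)ξ + λ ≤ 201 λ`, which bounds `|W|`
and, over `b - a ≤ 2·2^{-j}`, gives `|K| ≲ λ 2^{-j}`. For the other bound integrate by parts in `ξ`: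
`W'` is made of the edge slopes `3ξ²/4 + d - v` and `3ξ²/4 + c - v`, both at most
`(3/4)(b² - a²) + (d - c)/2` in size, so `∫|W'| ≲ (b + a)(b - a)² + (d - c)(b - a) ≲ λ`, and
`|x + v t| |K| ≲ λ`.
-/

noncomputable def expI (r : ℝ) : ℂ := Complex.exp (r * Complex.I)

@[simp]
lemma norm_expI (r : ℝ) : ‖expI r‖ = 1 := Complex.norm_exp_ofReal_mul_I r

lemma expI_add (r s : ℝ) : expI (r + s) = expI r * expI s := by
  simp only [expI, Complex.ofReal_add, add_mul, Complex.exp_add]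

@[fun_prop]
lemma continuous_expI : Continuous expI := by unfold expI; fun_prop

lemma hasDerivAt_expI_mul (X y : ℝ) :
    HasDerivAt (fun y => expI (X * y)) (X * Complex.I * expI (X * y)) y := by
  have := ((hasDerivAt_id y).ofReal_comp.const_mul ((X : ℂ) * Complex.I)).cexp
  convert this using 1
  · funext z; simp only [expI, id, Complex.ofReal_mul]; ring_nf
  · simp only [expI, id, Complex.ofReal_mul, Complex.ofReal_one]; ring_nf

lemma abs_mul_norm_integral_expI_mul_le {p q X CW CD : ℝ} (hpq : p ≤ q) {W W' : ℝ → ℂ}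
    (hW : ∀ ξ ∈ uIcc p q, HasDerivAt W (W' ξ) ξ) (hW' : IntervalIntegrable W' volume p q)
    (hCW : ∀ ξ ∈ Icc p q, ‖W ξ‖ ≤ CW) (hCD : ∀ ξ ∈ Icc p q, ‖W' ξ‖ ≤ CD) :
    |X| * ‖∫ ξ in p..q, expI (X * ξ) * W ξ‖ ≤ 2 * CW + CD * (q - p) := by
  have hCW0 : 0 ≤ CW := (norm_nonneg _).trans (hCW p ⟨le_rfl, hpq⟩)
  have hCD0 : 0 ≤ CD := (norm_nonneg _).trans (hCD p ⟨le_rfl, hpq⟩)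
  rcases eq_or_ne X 0 with rfl | hX
  · simp only [abs_zero, zero_mul]
    linarith [mul_nonneg hCD0 (sub_nonneg.2 hpq)]
  have hXI : (X : ℂ) * Complex.I ≠ 0 := by simp [hX]
  set e : ℝ → ℂ := fun y => expI (X * y) / (X * Complex.I)
  have he : ∀ y, HasDerivAt e (expI (X * y)) y := fun y => by
    simpa [mul_div_cancel_left₀ _ hXI] using (hasDerivAt_expI_mul X y).div_const (X * Complex.I)
  have he_norm : ∀ y, ‖e y‖ = |X|⁻¹ := by simp [e]
  have hparts := intervalIntegral.integral_mul_deriv_eq_deriv_mul (fun y hy => hW y hy)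
    (fun y _ => he y) hW' ((by fun_prop : Continuous fun y => expI (X * y)).intervalIntegrable p q)
  have hrest : ‖∫ y in p..q, W' y * e y‖ ≤ CD * |X|⁻¹ * (q - p) := by
    refine (intervalIntegral.norm_integral_le_of_norm_le_const fun y hy => ?_).trans_eq
      (by rw [abs_of_nonneg (sub_nonneg.2 hpq)])
    rw [uIoc_of_le hpq] at hy
    rw [norm_mul, he_norm]
    gcongr
    exact hCD y (Ioc_subset_Icc_self hy)
  have hbound : ‖∫ ξ in p..q, expI (X * ξ) * W ξ‖ ≤ (2 * CW + CD * (q - p)) * |X|⁻¹ := by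
    simp_rw [mul_comm (expI _)]
    rw [hparts]
    calc _ ≤ ‖W q * e q‖ + ‖W p * e p‖ + ‖∫ y in p..q, W' y * e y‖ :=
          (norm_sub_le _ _).trans (add_le_add_left (norm_sub_le _ _) _)
      _ ≤ CW * |X|⁻¹ + CW * |X|⁻¹ + CD * |X|⁻¹ * (q - p) := by
          rw [norm_mul, norm_mul, he_norm, he_norm]
          gcongr
          exacts [hCW q ⟨hpq, le_rfl⟩, hCW p ⟨le_rfl, hpq⟩]
      _ = _ := by ring
  calc |X| * _ ≤ |X| * ((2 * CW + CD * (q - p)) * |X|⁻¹) := by gcongr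
    _ = _ := by field_simp

lemma hasDerivAt_integral_between {E : Type*} [NormedAddCommGroup E] [NormedSpace ℝ E]
    [CompleteSpace E] {g : ℝ → E} (hg : Continuous g) {l u : ℝ → ℝ} {l' u' x : ℝ}
    (hl : HasDerivAt l l' x) (hu : HasDerivAt u u' x) :
    HasDerivAt (fun y => ∫ s in l y..u y, g s) (u' • g (u x) - l' • g (l x)) x := by
  have hG : ∀ z, HasDerivAt (fun z => ∫ s in (0 : ℝ)..z, g s) (g z) z := fun z =>
    (hg.integral_hasStrictDerivAt 0 z).hasDerivAt
  have := ((hG (u x)).scomp x hu).sub ((hG (l x)).scomp x hl)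
  refine this.congr_of_eventuallyEq (Eventually.of_forall fun y => ?_)
  exact (intervalIntegral.integral_interval_sub_left (hg.intervalIntegrable _ _)
    (hg.intervalIntegrable _ _)).symm

lemma enlarge_setOf_mem_Icc {S : Set ℝ} {f g : ℝ → ℝ} {r : ℝ} (hr : 0 ≤ r)
    (hfg : ∀ ξ ∈ S, f ξ ≤ g ξ) :
    enlarge {p | p.2 ∈ S ∧ p.1 ∈ Icc (f p.2) (g p.2)} r =
      {p | p.2 ∈ S ∧ p.1 ∈ Icc (f p.2 - r) (g p.2 + r)} := by
  ext ⟨τ, ξ⟩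
  simp only [enlarge, mem_ofPred_eq, mem_Icc]
  constructor
  · rintro ⟨τ', hτ', hξ, h1, h2⟩
    rw [abs_le] at hτ'
    exact ⟨hξ, by linarith, by linarith⟩
  · rintro ⟨hξ, h1, h2⟩
    have := hfg ξ hξ
    -- move `τ` to the nearest point of `[f ξ, g ξ]`
    refine ⟨τ - max (f ξ) (min τ (g ξ)), ?_, hξ, ?_, ?_⟩ <;> grind [abs_le]

lemma setIntegral_between_eq_integral_integral {E : Type*} [NormedAddCommGroup E]
    [NormedSpace ℝ E] [CompleteSpace E] {F : ℝ × ℝ → E} (hF : Continuous F) {f g : ℝ → ℝ}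
    (hf : Continuous f) (hg : Continuous g) {a b : ℝ} (hab : a ≤ b)
    (hfg : ∀ ξ ∈ Icc a b, f ξ ≤ g ξ) :
    ∫ p in {p : ℝ × ℝ | p.2 ∈ Icc a b ∧ p.1 ∈ Icc (f p.2) (g p.2)}, F p =
      ∫ ξ in a..b, ∫ τ in f ξ..g ξ, F (τ, ξ) := by
  set D := {p : ℝ × ℝ | p.2 ∈ Icc a b ∧ p.1 ∈ Icc (f p.2) (g p.2)}
  have hDc : IsCompact D := by
    obtain ⟨m, hm⟩ := (isCompact_Icc (a := a) (b := b) |>.image hf).bddBelow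
    obtain ⟨M, hM⟩ := (isCompact_Icc (a := a) (b := b) |>.image hg).bddAbove
    refine IsCompact.of_isClosed_subset (isCompact_Icc.prod isCompact_Icc :
      IsCompact (Icc m M ×ˢ Icc a b)) ?_ ?_
    · exact (isClosed_Icc.preimage continuous_snd).inter
        ((isClosed_le (hf.comp continuous_snd) continuous_fst).inter
          (isClosed_le continuous_fst (hg.comp continuous_snd)))
    · rintro ⟨τ, ξ⟩ ⟨hξ, h1, h2⟩
      exact ⟨⟨(hm ⟨ξ, hξ, rfl⟩).trans h1, h2.trans (hM ⟨ξ, hξ, rfl⟩)⟩, hξ⟩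
  have hint : Integrable (D.indicator F) (volume.prod volume) := by
    rw [← Measure.volume_eq_prod, integrable_indicator_iff hDc.measurableSet]
    exact hF.continuousOn.integrableOn_compact hDc
  have hfiber : ∀ ξ, ∫ τ, D.indicator F (τ, ξ) =
      (Icc a b).indicator (fun ξ => ∫ τ in Icc (f ξ) (g ξ), F (τ, ξ)) ξ := by
    intro ξ
    by_cases hξ : ξ ∈ Icc a b
    · rw [indicator_of_mem hξ, ← integral_indicator measurableSet_Icc]
      congr 1 with τ
      simp only [D, indicator_apply, mem_ofPred_eq, hξ, true_and]
    · simp only [D, indicator_apply, mem_ofPred_eq, hξ, false_and, if_false, integral_zero]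
  rw [← integral_indicator hDc.measurableSet, Measure.volume_eq_prod, integral_prod_symm _ hint]
  simp_rw [hfiber]
  rw [integral_indicator measurableSet_Icc, integral_Icc_eq_integral_Ioc,
    ← intervalIntegral.integral_of_le hab]
  refine intervalIntegral.integral_congr fun ξ hξ => ?_
  rw [integral_Icc_eq_integral_Ioc,
    ← intervalIntegral.integral_of_le (hfg ξ (uIcc_of_le hab ▸ hξ))]

def curvedBox (a b c d : ℝ) : Set (ℝ × ℝ) :=
  {p | a ≤ p.2 ∧ p.2 ≤ b ∧ c * p.2 ≤ p.1 - p.2 ^ 3 / 4 ∧ p.1 - p.2 ^ 3 / 4 ≤ d * p.2}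

lemma curvedBox_eq (a b c d : ℝ) :
    curvedBox a b c d =
      {p | p.2 ∈ Icc a b ∧ p.1 ∈ Icc (p.2 ^ 3 / 4 + c * p.2) (p.2 ^ 3 / 4 + d * p.2)} := by
  ext p
  simp only [curvedBox, mem_ofPred_eq, mem_Icc]
  constructor
  · rintro ⟨h1, h2, h3, h4⟩
    exact ⟨⟨h1, h2⟩, by linarith, by linarith⟩
  · rintro ⟨⟨h1, h2⟩, h3, h4⟩
    exact ⟨h1, h2, by linarith, by linarith⟩

/-- `W(ξ)`: the `τ`-integral of `e^{itτ}` over the fibre above `ξ` of the enlarged box, with `τ`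
recentred at `v ξ`. -/
noncomputable def fiberIntegral (c d lam v t ξ : ℝ) : ℂ :=
  ∫ σ in ξ ^ 3 / 4 + (c - v) * ξ - lam / 2..ξ ^ 3 / 4 + (d - v) * ξ + lam / 2, expI (t * σ)

lemma kernelK_curvedBox_eq {a b c d lam : ℝ} (ha : 0 ≤ a) (hab : a ≤ b) (hcd : c ≤ d)
    (hlam : 0 ≤ lam) (v t x : ℝ) :
    kernelK (curvedBox a b c d) lam t x =
      ∫ ξ in a..b, expI ((x + v * t) * ξ) * fiberIntegral c d lam v t ξ := by
  have hfg : ∀ ξ ∈ Icc a b, ξ ^ 3 / 4 + c * ξ ≤ ξ ^ 3 / 4 + d * ξ := fun ξ hξ => by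
    linarith [mul_le_mul_of_nonneg_right hcd (ha.trans hξ.1)]
  rw [kernelK, curvedBox_eq, enlarge_setOf_mem_Icc (by linarith) hfg,
    setIntegral_between_eq_integral_integral (f := fun ξ => ξ ^ 3 / 4 + c * ξ - lam / 2)
      (g := fun ξ => ξ ^ 3 / 4 + d * ξ + lam / 2) (by fun_prop) (by fun_prop) (by fun_prop) hab
      fun ξ hξ => by linarith [hfg ξ hξ]]
  refine intervalIntegral.integral_congr fun ξ _ => ?_
  have hphase : ∀ τ : ℝ, Complex.exp (((t * τ + x * ξ : ℝ) : ℂ) * Complex.I) =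
      expI ((x + v * t) * ξ) * expI (t * (τ - v * ξ)) := fun τ => by
    rw [← expI_add]; unfold expI; congr 2; push_cast; ring
  simp only [hphase, intervalIntegral.integral_const_mul, fiberIntegral]
  rw [intervalIntegral.integral_comp_sub_right (fun σ => expI (t * σ))]
  ring_nf

lemma norm_fiberIntegral_le {c d lam ξ : ℝ} (hξ : 0 ≤ ξ) (hcd : c ≤ d) (hlam : 0 ≤ lam)
    (v t : ℝ) : ‖fiberIntegral c d lam v t ξ‖ ≤ (d - c) * ξ + lam := by
  refine (intervalIntegral.norm_integral_le_of_norm_le_const (C := 1)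
    fun σ _ => (norm_expI _).le).trans_eq ?_
  rw [one_mul, abs_of_nonneg (by linarith [mul_le_mul_of_nonneg_right hcd hξ])]
  ring

lemma hasDerivAt_fiberIntegral (c d lam v t ξ : ℝ) :
    HasDerivAt (fiberIntegral c d lam v t)
      ((3 * ξ ^ 2 / 4 + (d - v)) • expI (t * (ξ ^ 3 / 4 + (d - v) * ξ + lam / 2)) -
        (3 * ξ ^ 2 / 4 + (c - v)) • expI (t * (ξ ^ 3 / 4 + (c - v) * ξ - lam / 2))) ξ := by
  have hcubic : ∀ w : ℝ, HasDerivAt (fun ξ : ℝ => ξ ^ 3 / 4 + w * ξ) (3 * ξ ^ 2 / 4 + w) ξ :=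
    fun w => by
      simpa using ((hasDerivAt_pow 3 ξ).div_const 4).fun_add ((hasDerivAt_id ξ).const_mul w)
  exact hasDerivAt_integral_between (g := fun σ => expI (t * σ)) (by fun_prop)
    ((hcubic (c - v)).sub_const (lam / 2)) ((hcubic (d - v)).add_const (lam / 2))

lemma abs_edge_slope_sub_le {a b c d w ξ : ℝ} (ha : 0 ≤ a) (hξ : ξ ∈ Icc a b) (hw : w ∈ Icc c d) :
    |3 * ξ ^ 2 / 4 + (w - (3 * ((a + b) / 2) ^ 2 / 4 + (c + d) / 2))| ≤
      3 / 4 * (b ^ 2 - a ^ 2) + (d - c) / 2 := by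
  obtain ⟨haξ, hξb⟩ := hξ
  have : a ^ 2 ≤ ξ ^ 2 := by nlinarith
  have : ξ ^ 2 ≤ b ^ 2 := by nlinarith
  have : a ^ 2 ≤ ((a + b) / 2) ^ 2 := by nlinarith
  have : ((a + b) / 2) ^ 2 ≤ b ^ 2 := by nlinarith
  rw [abs_le]
  constructor <;> linarith [hw.1, hw.2]

lemma norm_kernelK_curvedBox_le {a b c d lam : ℝ} (ha : 0 ≤ a) (hab : a ≤ b) (hcd : c ≤ d)
    (hlam : 0 ≤ lam) (t x : ℝ) :
    ‖kernelK (curvedBox a b c d) lam t x‖ ≤ ((d - c) * b + lam) * (b - a) := by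
  rw [kernelK_curvedBox_eq ha hab hcd hlam 0]
  refine (intervalIntegral.norm_integral_le_of_norm_le_const fun ξ hξ => ?_).trans_eq
    (by rw [abs_of_nonneg (sub_nonneg.2 hab)])
  rw [uIoc_of_le hab] at hξ
  rw [norm_mul, norm_expI, one_mul]
  refine (norm_fiberIntegral_le (ha.trans hξ.1.le) hcd hlam 0 t).trans ?_
  gcongr
  exact hξ.2

lemma abs_mul_norm_kernelK_curvedBox_le {a b c d lam : ℝ} (ha : 0 ≤ a) (hab : a ≤ b)
    (hcd : c ≤ d) (hlam : 0 ≤ lam) (t x : ℝ) :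
    |x + (3 * ((a + b) / 2) ^ 2 / 4 + (c + d) / 2) * t| * ‖kernelK (curvedBox a b c d) lam t x‖ ≤
      2 * ((d - c) * b + lam) + (3 / 2 * (b ^ 2 - a ^ 2) + (d - c)) * (b - a) := by
  set v := 3 * ((a + b) / 2) ^ 2 / 4 + (c + d) / 2
  rw [kernelK_curvedBox_eq ha hab hcd hlam v]
  refine abs_mul_norm_integral_expI_mul_le hab (fun ξ _ => hasDerivAt_fiberIntegral c d lam v t ξ)
    (Continuous.intervalIntegrable (by fun_prop) _ _) (fun ξ hξ => ?_) (fun ξ hξ => ?_)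
  · refine (norm_fiberIntegral_le (ha.trans hξ.1) hcd hlam v t).trans ?_
    gcongr
    exact hξ.2
  · refine (norm_sub_le _ _).trans ?_
    rw [norm_smul, norm_smul, norm_expI, norm_expI, mul_one, mul_one, Real.norm_eq_abs,
      Real.norm_eq_abs]
    linarith [abs_edge_slope_sub_le ha hξ (right_mem_Icc.2 hcd),
      abs_edge_slope_sub_le ha hξ (left_mem_Icc.2 hcd)]

lemma enorm_le_ofReal_mul_min_inv {E : Type*} [NormedAddCommGroup E] {z : E} {M A X : ℝ}
    (hM : 0 < M) (hA : ‖z‖ ≤ M * A) (hX : |X| * ‖z‖ ≤ M) :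
    (‖z‖₊ : ℝ≥0∞) ≤ ENNReal.ofReal M * min (ENNReal.ofReal A) (ENNReal.ofReal |X|)⁻¹ := by
  rw [← enorm_eq_nnnorm, ← ofReal_norm, mul_min, le_min_iff]
  refine ⟨(ENNReal.ofReal_le_ofReal hA).trans_eq (ENNReal.ofReal_mul hM.le), ?_⟩
  rcases eq_or_ne X 0 with rfl | hX0
  · simp [hM]
  rw [← div_eq_mul_inv, ENNReal.le_div_iff_mul_le (by simp [hX0]) (by simp),
    ← ENNReal.ofReal_mul' (abs_nonneg X), mul_comm]
  exact ENNReal.ofReal_le_ofReal hX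

/-- Pointwise kernel bound for enlarged curved boxes. -/
theorem kernel_pointwise_bound :
    ∃ C : ℝ, 0 < C ∧ ∀ (j k : ℤ), 1 ≤ k → ∀ a b c d : ℝ,
      0 ≤ a → a ≤ b → c ≤ d →
      (b + a) * (d - c) ≤ 200 * (k : ℝ) / 2 ^ (3 * j) →
      b - a ≤ 2 / 2 ^ j →
      b + a ≤ 10 * (k : ℝ) / 2 ^ j →
      ∀ t x : ℝ,
        (‖kernelK {p : ℝ × ℝ | a ≤ p.2 ∧ p.2 ≤ b ∧
              c * p.2 ≤ p.1 - p.2 ^ 3 / 4 ∧ p.1 - p.2 ^ 3 / 4 ≤ d * p.2}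
            ((k : ℝ) / 2 ^ (3 * j)) t x‖₊ : ℝ≥0∞) ≤
          ENNReal.ofReal (C * ((k : ℝ) / 2 ^ (3 * j))) *
            min (ENNReal.ofReal ((2 : ℝ) ^ (-j)))
              (ENNReal.ofReal |x + (3 * ((a + b) / 2) ^ 2 / 4 + (c + d) / 2) * t|)⁻¹ := by
  refine ⟨1000, by norm_num, fun j k hk a b c d ha hab hcd hwidth hlen hsum t x => ?_⟩
  set P : ℝ := 2 ^ j
  set lam : ℝ := (k : ℝ) / 2 ^ (3 * j)
  have hP : 0 < P := by positivity
  have hlam : 0 < lam := div_pos (by exact_mod_cast hk) (by positivity)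
  have hP3 : (2 : ℝ) ^ (3 * j) = P ^ 3 := by rw [mul_comm, zpow_mul]; norm_cast
  have hlamP : (k : ℝ) / P = lam * P ^ 2 := by
    simp only [lam, hP3]
    field_simp
  have hwidth' : (b + a) * (d - c) ≤ 200 * lam := by rwa [mul_div_assoc] at hwidth
  have hsum' : b + a ≤ 10 * lam * P ^ 2 := by rwa [mul_assoc, ← hlamP, ← mul_div_assoc]
  have hdca : 0 ≤ (d - c) * a := mul_nonneg (sub_nonneg.2 hcd) ha
  have hcube : (b + a) * (b - a) ^ 2 ≤ 40 * lam := by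
    calc (b + a) * (b - a) ^ 2 ≤ 10 * lam * P ^ 2 * (2 / P) ^ 2 := by gcongr
      _ = 40 * lam := by field_simp; ring
  refine enorm_le_ofReal_mul_min_inv (by positivity) ?_ ?_
  · calc _ ≤ ((d - c) * b + lam) * (b - a) := norm_kernelK_curvedBox_le ha hab hcd hlam.le t x
      _ ≤ 201 * lam * (2 / P) := by gcongr; linarith
      _ ≤ 1000 * lam * 2 ^ (-j) := by rw [zpow_neg]; field_simp; linarith
  · calc _ ≤ 2 * ((d - c) * b + lam) + (3 / 2 * (b ^ 2 - a ^ 2) + (d - c)) * (b - a) :=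
          abs_mul_norm_kernelK_curvedBox_le ha hab hcd hlam.le t x
      _ ≤ 1000 * lam := by linarith
end
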